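/- Fix nonnegative integers i, j, k with k ≤ j ≤ i and k ≥ 1. Then (q^{i-k+1};q)_k · [j choose k]_q = ∑_λ (-1)^{ol(λ)} q^{|λ| + ol(λ)·(i-k+1)}, where the sum runs over all overpartitions λ with exactly k nonnegative parts such that: every part is at most j−1, and for each 1 ≤ s ≤ k−1, if j−s occurs as a part then there are at least k−s overlined parts strictly to its right. Here ol(λ) is the number of overlined parts of λ and |λ| is the sum of its parts. -/

import Mathlib

open Finset
open scoped Classical

/-- The variable `q`, as a rational function over `ℚ`. -/
noncomputable def q : RatFunc ℚ := RatFunc.X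

/-- The q-shifted factorial `(a; q)_k`. -/
noncomputable def qPoch (a : RatFunc ℚ) (k : ℕ) : RatFunc ℚ :=
  ∏ s ∈ Finset.range k, (1 - a * q ^ s)

/-- The Gaussian (q-binomial) coefficient. -/
noncomputable def qbinom (j k : ℕ) : RatFunc ℚ :=
  qPoch q j / (qPoch q k * qPoch q (j - k))

/-- The set `O(i,j,k)` of overpartitions with exactly `k` nonnegative parts, each part at
most `j-1` (encoded as a weakly decreasing function `Fin k → Fin j` together with an
overlining indicator `Fin k → Bool`, where only first occurrences may be overlined),
such that for each `1 ≤ s ≤ k-1`, if `j-s` occurs as a part then there are at least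
`k-s` overlined parts strictly to its right. (It does not depend on `i`.) -/
noncomputable def AGset (j k : ℕ) : Finset ((Fin k → Fin j) × (Fin k → Bool)) :=
  Finset.univ.filter (fun p =>
    (∀ a b : Fin k, a ≤ b → (p.1 b : ℕ) ≤ (p.1 a : ℕ)) ∧
    (∀ a : Fin k, p.2 a = true → ∀ b : Fin k, b < a → p.1 b ≠ p.1 a) ∧
    (∀ s ∈ Finset.Icc 1 (k - 1), ∀ a : Fin k, (p.1 a : ℕ) = j - s →
      k - s ≤ (Finset.univ.filter (fun b : Fin k => a < b ∧ p.2 b = true)).card))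

/-- The number of overlined parts of an overpartition. -/
def ol {j k : ℕ} (p : (Fin k → Fin j) × (Fin k → Bool)) : ℕ :=
  (Finset.univ.filter (fun a : Fin k => p.2 a = true)).card

/-- The size (sum of parts) of an overpartition. -/
def psize {j k : ℕ} (p : (Fin k → Fin j) × (Fin k → Bool)) : ℕ :=
  ∑ a, (p.1 a : ℕ)

/-!
The Gaussian coefficient `[j choose k]_q` is the generating function of partitions `μ` with `k`
parts in `[0, j - k]`, and expanding `(q^m; q)_k = ∏_{s < k} (1 - q^(m + s))` gives a signed
sum over sets `ε` of positions, with weight `(-1)^|ε| q^(|ε| m + ∑_{s ∈ ε} s)`. Adding to each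
part `μ_a` the number of positions of `ε` to the right of `a` turns `(μ, ε)` into an
overpartition whose overlined positions are `ε`, and `∑_{s ∈ ε} s` is exactly the total amount
added. Conversely, since overlined parts are first occurrences, `λ_a - λ_b` is at least the
number of overlined positions in `(a, b]`, so subtracting the counts again leaves a partition;
the condition on the parts `j - s` is precisely what keeps its parts at most `j - k`.
-/

lemma q_pow_ne_one {n : ℕ} (hn : n ≠ 0) : q ^ n ≠ 1 := by
  intro h
  have : (Polynomial.X ^ n : Polynomial ℚ) = 1 :=
    RatFunc.algebraMap_injective ℚ (by simpa [q, RatFunc.algebraMap_X] using h)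
  simpa [hn] using congrArg Polynomial.natDegree this

lemma qPoch_succ (a : RatFunc ℚ) (k : ℕ) : qPoch a (k + 1) = qPoch a k * (1 - a * q ^ k) :=
  prod_range_succ _ _

lemma qPoch_q_succ (m : ℕ) : qPoch q (m + 1) = qPoch q m * (1 - q ^ (m + 1)) := by
  rw [qPoch_succ, pow_succ']

lemma qPoch_q_ne_zero (m : ℕ) : qPoch q m ≠ 0 :=
  prod_ne_zero_iff.2 fun s _ => by
    rw [← pow_succ', sub_ne_zero]
    exact (q_pow_ne_one s.succ_ne_zero).symm

lemma Fin.antitone_cons_iff {α : Type*} [Preorder α] {n : ℕ} {a : α} {f : Fin n → α} :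
    Antitone (Fin.cons a f : Fin (n + 1) → α) ↔ (∀ i, f i ≤ a) ∧ Antitone f := by
  simp only [antitone_iff_forall_lt]
  exact Fin.liftFun_cons (· ≥ ·)

noncomputable def boxPartitions (n k : ℕ) : Finset (Fin k → Fin (n + 1)) :=
  univ.filter Antitone

noncomputable def boxGF (n k : ℕ) : RatFunc ℚ :=
  ∑ μ ∈ boxPartitions n k, q ^ ∑ a, (μ a : ℕ)

lemma mem_boxPartitions {n k : ℕ} {μ : Fin k → Fin (n + 1)} :
    μ ∈ boxPartitions n k ↔ Antitone μ := by
  simp [boxPartitions]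

lemma boxGF_zero_right (n : ℕ) : boxGF n 0 = 1 := by
  simp [boxGF, boxPartitions, Subsingleton.antitone]

lemma boxGF_zero_left (k : ℕ) : boxGF 0 k = 1 := by
  simp [boxGF, boxPartitions, Subsingleton.antitone']

lemma sum_boxPartitions_head_ne_last (n k : ℕ) :
    ∑ μ ∈ (boxPartitions (n + 1) (k + 1)).filter (fun μ => μ 0 ≠ Fin.last (n + 1)),
      q ^ ∑ a, (μ a : ℕ) = boxGF n (k + 1) := by
  symm
  apply sum_nbij' (fun ν a => (ν a).castSucc) (fun μ a => Fin.clamp (μ a) n)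
  · intro ν hν
    simp only [mem_filter, mem_boxPartitions] at hν ⊢
    exact ⟨Fin.strictMono_castSucc.monotone.comp_antitone hν, Fin.castSucc_ne_last _⟩
  · intro μ hμ
    simp only [mem_filter, mem_boxPartitions] at hμ ⊢
    exact Fin.clamp_monotone.comp_antitone (Fin.val_strictMono.monotone.comp_antitone hμ.1)
  · intro ν _
    ext a
    simp [Fin.clamp, Nat.lt_succ_iff.mp (ν a).isLt]
  · intro μ hμ
    simp only [mem_filter, mem_boxPartitions] at hμ
    ext a
    have : (μ a : ℕ) ≤ n :=
      Nat.lt_succ_iff.mp ((Fin.le_def.mp (hμ.1 (Fin.zero_le a))).trans_lt (Fin.val_lt_last hμ.2))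
    simp [Fin.clamp, this]
  · intro ν _
    simp

lemma sum_boxPartitions_head_eq_last (n k : ℕ) :
    ∑ μ ∈ (boxPartitions (n + 1) (k + 1)).filter (fun μ => μ 0 = Fin.last (n + 1)),
      q ^ ∑ a, (μ a : ℕ) = q ^ (n + 1) * boxGF (n + 1) k := by
  rw [boxGF, mul_sum]
  symm
  apply sum_nbij' (Fin.cons (α := fun _ => Fin (n + 2)) (Fin.last (n + 1))) Fin.tail
  · intro ν hν
    simp only [mem_filter, mem_boxPartitions, Fin.antitone_cons_iff] at hν ⊢
    exact ⟨⟨fun i => Fin.le_last _, hν⟩, by simp⟩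
  · intro μ hμ
    simp only [mem_filter, mem_boxPartitions] at hμ ⊢
    exact hμ.1.comp_monotone (Fin.strictMono_succ.monotone)
  · intro ν _
    simp
  · intro μ hμ
    simp only [mem_filter, mem_boxPartitions] at hμ
    rw [← hμ.2, Fin.cons_self_tail]
  · intro ν _
    simp [Fin.sum_univ_succ, pow_add]

lemma boxGF_succ_succ (n k : ℕ) :
    boxGF (n + 1) (k + 1) = boxGF n (k + 1) + q ^ (n + 1) * boxGF (n + 1) k := by
  rw [boxGF, ← sum_filter_add_sum_filter_not _ (fun μ => μ 0 = Fin.last (n + 1)),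
    sum_boxPartitions_head_ne_last, sum_boxPartitions_head_eq_last, add_comm]

lemma qPoch_mul_qPoch_mul_boxGF (n k : ℕ) :
    qPoch q k * qPoch q n * boxGF n k = qPoch q (n + k) := by
  induction n generalizing k with
  | zero => simp [boxGF_zero_left, qPoch]
  | succ n ihn =>
    induction k with
    | zero => simp [boxGF_zero_right, qPoch]
    | succ k ihk =>
      calc qPoch q (k + 1) * qPoch q (n + 1) * boxGF (n + 1) (k + 1)
          = (1 - q ^ (n + 1)) * (qPoch q (k + 1) * qPoch q n * boxGF n (k + 1))
            + q ^ (n + 1) * (1 - q ^ (k + 1)) *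
              (qPoch q k * qPoch q (n + 1) * boxGF (n + 1) k) := by
            rw [boxGF_succ_succ, qPoch_q_succ n, qPoch_q_succ k]; ring
        _ = qPoch q (n + 1 + (k + 1)) := by
            rw [ihn, ihk, show n + 1 + (k + 1) = n + (k + 1) + 1 by omega, qPoch_q_succ,
              show n + 1 + k = n + (k + 1) by omega]
            ring

lemma qbinom_eq_boxGF {j k : ℕ} (hkj : k ≤ j) : qbinom j k = boxGF (j - k) k := by
  obtain ⟨n, rfl⟩ := Nat.exists_eq_add_of_le' hkj
  rw [qbinom, ← qPoch_mul_qPoch_mul_boxGF, Nat.add_sub_cancel]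
  have := qPoch_q_ne_zero k
  have := qPoch_q_ne_zero n
  field_simp

lemma qPoch_eq_sum_bool (a : RatFunc ℚ) (k : ℕ) :
    qPoch a k = ∑ ε : Fin k → Bool,
      (-a) ^ #{s | ε s = true} * q ^ ∑ s with ε s = true, (s : ℕ) := by
  have factor (s : Fin k) :
      1 - a * q ^ (s : ℕ) = ∑ b : Bool, if b = true then -a * q ^ (s : ℕ) else 1 := by
    rw [Fintype.sum_bool]; simp only [if_true, Bool.false_eq_true, if_false]; ring
  rw [qPoch, ← Fin.prod_univ_eq_prod_range, prod_congr rfl fun s _ => factor s, Fintype.prod_sum]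
  refine sum_congr rfl fun ε _ => ?_
  rw [← prod_filter, prod_mul_distrib, prod_const, prod_pow_eq_pow_sum]

noncomputable def overlinedAfter {k : ℕ} (ε : Fin k → Bool) (a : Fin k) : ℕ :=
  (Finset.univ.filter (fun b : Fin k => a < b ∧ ε b = true)).card

section overlinedAfter

variable {k : ℕ} (ε : Fin k → Bool)

lemma sum_overlinedAfter : ∑ a, overlinedAfter ε a = ∑ b with ε b = true, (b : ℕ) := by
  calc ∑ a, overlinedAfter ε a = ∑ a, ∑ b, if a < b ∧ ε b = true then 1 else 0 := by
        simp only [overlinedAfter, card_filter]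
    _ = ∑ b, if ε b = true then (b : ℕ) else 0 := by
        rw [sum_comm]
        refine sum_congr rfl fun b _ => ?_
        split_ifs with h <;> simp [h, filter_gt_eq_Iio]
    _ = ∑ b with ε b = true, (b : ℕ) := (sum_filter _ _).symm

lemma overlinedAfter_antitone : Antitone (overlinedAfter ε) := fun _ _ hab =>
  card_le_card fun _ hc => by
    simp only [mem_filter, mem_univ, true_and] at hc ⊢
    exact ⟨hab.trans_lt hc.1, hc.2⟩

lemma overlinedAfter_lt_of_lt {a b : Fin k} (hab : a < b) (hb : ε b = true) :
    overlinedAfter ε b < overlinedAfter ε a := by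
  refine card_lt_card ((ssubset_iff_of_subset fun c hc => ?_).2 ⟨b, ?_, ?_⟩) <;>
    simp only [mem_filter, mem_univ, true_and] at *
  · exact ⟨hab.trans hc.1, hc.2⟩
  · exact ⟨hab, hb⟩
  · exact fun h => lt_irrefl b h.1

lemma overlinedAfter_le_pred (a : Fin k) : overlinedAfter ε a ≤ k - 1 :=
  calc overlinedAfter ε a ≤ #(Ioi a) := card_le_card fun c hc => by
        simp only [mem_filter, mem_univ, true_and] at hc
        exact mem_Ioi.2 hc.1
    _ ≤ k - 1 := by rw [Fin.card_Ioi]; omega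

end overlinedAfter

lemma overlinedAfter_last {n : ℕ} (ε : Fin (n + 1) → Bool) :
    overlinedAfter ε (Fin.last n) = 0 := by
  simp [overlinedAfter, not_lt_of_ge (Fin.le_last _)]

lemma injOn_of_overlined_first {ι β : Type*} [LinearOrder ι] {f : ι → β} {ε : ι → Bool}
    (hfirst : ∀ a, ε a = true → ∀ b, b < a → f b ≠ f a) : Set.InjOn f {c | ε c = true} := by
  intro c hc c' hc' hcc'
  by_contra hne
  rcases lt_or_gt_of_ne hne with h | h
  · exact hfirst c' hc' c h hcc'
  · exact hfirst c hc c' h hcc'.symm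

lemma overlinedAfter_add_le {j k : ℕ} {f : Fin k → Fin j} {ε : Fin k → Bool} (hf : Antitone f)
    (hfirst : ∀ a, ε a = true → ∀ b, b < a → f b ≠ f a)
    {a b : Fin k} (hab : a ≤ b) :
    overlinedAfter ε a + f b ≤ overlinedAfter ε b + f a := by
  have hsplit : overlinedAfter ε a ≤ #{c | a < c ∧ c ≤ b ∧ ε c = true} + overlinedAfter ε b := by
    refine (card_le_card fun c hc => ?_).trans (card_union_le _ _)
    simp only [mem_union, mem_filter, mem_univ, true_and] at hc ⊢
    rcases le_or_gt c b with hcb | hbc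
    · exact Or.inl ⟨hc.1, hcb, hc.2⟩
    · exact Or.inr ⟨hbc, hc.2⟩
  have hvalues : #{c | a < c ∧ c ≤ b ∧ ε c = true} ≤ #(Ico (f b) (f a)) := by
    refine card_le_card_of_injOn f (fun c hc => ?_)
      ((injOn_of_overlined_first hfirst).mono fun c hc => ?_)
    all_goals simp only [coe_filter, mem_univ, true_and, Set.mem_ofPred_eq] at hc
    · exact mem_Ico.2 ⟨hf hc.2.1, lt_of_le_of_ne (hf hc.1.le) (hfirst c hc.2.2 a hc.1).symm⟩
    · exact hc.2.2
  rw [Fin.card_Ico] at hvalues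
  have := Fin.le_def.mp (hf hab)
  omega

lemma mem_AGset {j k : ℕ} {p : (Fin k → Fin j) × (Fin k → Bool)} :
    p ∈ AGset j k ↔ Antitone p.1 ∧ (∀ a, p.2 a = true → ∀ b, b < a → p.1 b ≠ p.1 a) ∧
      ∀ s ∈ Icc 1 (k - 1), ∀ a, (p.1 a : ℕ) = j - s → k - s ≤ overlinedAfter p.2 a := by
  simp only [AGset, mem_filter, mem_univ, true_and]
  rfl

section Bijection

variable {j k : ℕ}

noncomputable def addOverlinedAfter (hkj : k ≤ j) (x : (Fin k → Fin (j - k + 1)) × (Fin k → Bool)) :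
    (Fin k → Fin j) × (Fin k → Bool) :=
  (fun a => ⟨x.1 a + overlinedAfter x.2 a, by
    have := (x.1 a).isLt; have := overlinedAfter_le_pred x.2 a; have := a.isLt; omega⟩, x.2)

-- `Fin.clamp` only makes the map total: on `AGset j k` it does nothing.
noncomputable def subOverlinedAfter (p : (Fin k → Fin j) × (Fin k → Bool)) :
    (Fin k → Fin (j - k + 1)) × (Fin k → Bool) :=
  (fun a => Fin.clamp (p.1 a - overlinedAfter p.2 a) (j - k), p.2)

lemma addOverlinedAfter_mem_AGset (hkj : k ≤ j) {x : (Fin k → Fin (j - k + 1)) × (Fin k → Bool)}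
    (hx : Antitone x.1) : addOverlinedAfter hkj x ∈ AGset j k := by
  refine mem_AGset.2 ⟨fun a b hab => ?_, fun a ha b hba => ?_, fun s hs a ha => ?_⟩
  · show (x.1 b : ℕ) + overlinedAfter x.2 b ≤ x.1 a + overlinedAfter x.2 a
    exact add_le_add (hx hab) (overlinedAfter_antitone x.2 hab)
  · refine Fin.ne_of_val_ne (ne_of_gt ?_)
    show (x.1 a : ℕ) + overlinedAfter x.2 a < x.1 b + overlinedAfter x.2 b
    exact add_lt_add_of_le_of_lt (hx hba.le) (overlinedAfter_lt_of_lt x.2 hba ha)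
  · change (x.1 a : ℕ) + overlinedAfter x.2 a = j - s at ha
    show k - s ≤ overlinedAfter x.2 a
    have := (x.1 a).isLt
    omega

lemma subOverlinedAfter_addOverlinedAfter (hkj : k ≤ j)
    (x : (Fin k → Fin (j - k + 1)) × (Fin k → Bool)) :
    subOverlinedAfter (addOverlinedAfter hkj x) = x := by
  ext a
  · simp [subOverlinedAfter, addOverlinedAfter, Fin.clamp, Nat.lt_succ_iff.mp (x.1 a).isLt]
  · rfl

variable {p : (Fin k → Fin j) × (Fin k → Bool)}

lemma overlinedAfter_le_of_mem_AGset (hp : p ∈ AGset j k) (a : Fin k) :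
    overlinedAfter p.2 a ≤ p.1 a := by
  obtain ⟨n, rfl⟩ : ∃ n, k = n + 1 := ⟨k - 1, by have := a.isLt; omega⟩
  have := overlinedAfter_add_le (mem_AGset.1 hp).1 (mem_AGset.1 hp).2.1 (Fin.le_last a)
  rw [overlinedAfter_last] at this
  omega

lemma sub_overlinedAfter_le_of_mem_AGset (hp : p ∈ AGset j k) (a : Fin k) :
    (p.1 a : ℕ) - overlinedAfter p.2 a ≤ j - k := by
  by_cases hsmall : (p.1 a : ℕ) ≤ j - k
  · omega
  · have := (p.1 a).isLt
    have := (mem_AGset.1 hp).2.2 (j - p.1 a) (mem_Icc.2 ⟨by omega, by omega⟩) a (by omega)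
    omega

lemma antitone_subOverlinedAfter (hp : p ∈ AGset j k) : Antitone (subOverlinedAfter p).1 :=
  fun a b hab => Fin.clamp_monotone (by
    have := overlinedAfter_add_le (mem_AGset.1 hp).1 (mem_AGset.1 hp).2.1 hab
    omega)

lemma addOverlinedAfter_subOverlinedAfter (hkj : k ≤ j) (hp : p ∈ AGset j k) :
    addOverlinedAfter hkj (subOverlinedAfter p) = p := by
  ext a
  · have := overlinedAfter_le_of_mem_AGset hp a
    have := sub_overlinedAfter_le_of_mem_AGset hp a
    simp only [addOverlinedAfter, subOverlinedAfter, Fin.clamp]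
    omega
  · rfl

lemma psize_addOverlinedAfter (hkj : k ≤ j) (x : (Fin k → Fin (j - k + 1)) × (Fin k → Bool)) :
    psize (addOverlinedAfter hkj x) = ∑ a, (x.1 a : ℕ) + ∑ a, overlinedAfter x.2 a :=
  sum_add_distrib

end Bijection

theorem AG_overpartition_interpretation_general (i j k : ℕ) (hkj : k ≤ j) :
    qPoch (q ^ (i - k + 1)) k * qbinom j k =
      ∑ p ∈ AGset j k, (-1 : RatFunc ℚ) ^ ol p * q ^ (psize p + ol p * (i - k + 1)) := by
  rw [mul_comm, qbinom_eq_boxGF hkj, qPoch_eq_sum_bool, boxGF, sum_mul_sum, ← sum_product']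
  refine sum_nbij' (addOverlinedAfter hkj) subOverlinedAfter (fun x hx => ?_) (fun p hp => ?_)
    (fun x _ => subOverlinedAfter_addOverlinedAfter hkj x)
    (fun p hp => addOverlinedAfter_subOverlinedAfter hkj hp) (fun x _ => ?_)
  · exact addOverlinedAfter_mem_AGset hkj (mem_boxPartitions.1 (mem_product.1 hx).1)
  · exact mem_product.2 ⟨mem_boxPartitions.2 (antitone_subOverlinedAfter hp), mem_univ _⟩
  · have hol : ol (addOverlinedAfter hkj x) = #{s | x.2 s = true} := rfl
    rw [hol, psize_addOverlinedAfter, sum_overlinedAfter, neg_pow]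
    ring

/-- Theorem 2.2 (per `k`): for `1 ≤ k ≤ j ≤ i`,
`(q^{i-k+1};q)_k [j choose k]_q = ∑_{λ ∈ O(i,j,k)} (-1)^{ol(λ)} q^{|λ| + ol(λ)(i-k+1)}`. -/
theorem AG_overpartition_interpretation (i j k : ℕ) (hk : 1 ≤ k) (hkj : k ≤ j) (hji : j ≤ i) :
    qPoch (q ^ (i - k + 1)) k * qbinom j k =
      ∑ p ∈ AGset j k, (-1 : RatFunc ℚ) ^ ol p * q ^ (psize p + ol p * (i - k + 1)) :=
  AG_overpartition_interpretation_general i j k hkj
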